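/- arXiv:2508.08337 — 2 statements merged into one kernel-verified Lean document; each statement's English description precedes it below -/
import Mathlib

section
/- Let a > 0 and 0 < r1 < r2, and set q̃ = a·ln(r2/r1)/(r2 − r1). Then the difference of Gamma CDFs D(q) = gammaCDFReal a r2 q − gammaCDFReal a r1 q is strictly increasing on the interval [0, q̃] and strictly decreasing on [q̃, ∞); in particular D attains its maximum over [0, ∞) exactly at q̃. -/
open ProbabilityTheory

namespace ProbabilityTheory

/-- CDF of the gamma distribution (removed from Mathlib; restored with its old definition). -/
noncomputable def gammaCDFReal (a r : ℝ) : StieltjesFunction ℝ :=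
  cdf (gammaMeasure a r)

end ProbabilityTheory

open MeasureTheory Real Set in
private lemma integrable_gammaPDFReal' {a r : ℝ} (ha : 0 < a) (hr : 0 < r) :
    Integrable (gammaPDFReal a r) := by
  refine ⟨(measurable_gammaPDFReal a r).aestronglyMeasurable, ?_⟩
  rw [hasFiniteIntegral_iff_ofReal (ae_of_all _ (gammaPDFReal_nonneg ha hr))]
  have : ∫⁻ x, ENNReal.ofReal (gammaPDFReal a r x) = 1 := lintegral_gammaPDF_eq_one ha hr
  rw [this]; exact ENNReal.one_lt_top

open MeasureTheory Real Set in
private lemma gammaCDF_diff_eq {a r : ℝ} (ha : 0 < a) (hr : 0 < r) {x y : ℝ} :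
    gammaCDFReal a r y - gammaCDFReal a r x = ∫ t in x..y, gammaPDFReal a r t := by
  rw [gammaCDFReal, cdf_gammaMeasure_eq_integral ha hr, cdf_gammaMeasure_eq_integral ha hr,
    intervalIntegral.integral_Iic_sub_Iic
      ((integrable_gammaPDFReal' ha hr).integrableOn)
      ((integrable_gammaPDFReal' ha hr).integrableOn)]

open MeasureTheory Real Set in
private lemma gammaPDF_sign {a r1 r2 : ℝ} (ha : 0 < a) (hr1 : 0 < r1) (h12 : r1 < r2)
    {x : ℝ} (hx : 0 < x) :
    (x < a * Real.log (r2 / r1) / (r2 - r1) →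
      gammaPDFReal a r1 x < gammaPDFReal a r2 x) ∧
    (a * Real.log (r2 / r1) / (r2 - r1) < x →
      gammaPDFReal a r2 x < gammaPDFReal a r1 x) := by
  have hr2 : 0 < r2 := hr1.trans h12
  have hΓ : 0 < Real.Gamma a := Real.Gamma_pos_of_pos ha
  have hxp : 0 < x ^ (a - 1) := Real.rpow_pos_of_pos hx _
  have hrw : ∀ r : ℝ, 0 < r → gammaPDFReal a r x
      = x ^ (a - 1) / Real.Gamma a * Real.exp (a * Real.log r - r * x) := by
    intro r hr
    rw [gammaPDFReal, if_pos hx.le, Real.rpow_def_of_pos hr, Real.exp_sub, Real.exp_neg,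
      mul_comm (Real.log r) a]
    ring
  rw [hrw r1 hr1, hrw r2 hr2]
  have hlog : Real.log (r2 / r1) = Real.log r2 - Real.log r1 := Real.log_div hr2.ne' hr1.ne'
  have hd : 0 < r2 - r1 := by linarith
  constructor
  · intro h
    have : x * (r2 - r1) < a * Real.log (r2 / r1) := by
      rw [lt_div_iff₀ hd] at h; linarith
    rw [hlog] at this
    have : a * Real.log r1 - r1 * x < a * Real.log r2 - r2 * x := by nlinarith
    exact mul_lt_mul_of_pos_left (Real.exp_lt_exp.mpr this) (by positivity)
  · intro h
    have : a * Real.log (r2 / r1) < x * (r2 - r1) := by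
      rw [div_lt_iff₀ hd] at h; linarith
    rw [hlog] at this
    have : a * Real.log r2 - r2 * x < a * Real.log r1 - r1 * x := by nlinarith
    exact mul_lt_mul_of_pos_left (Real.exp_lt_exp.mpr this) (by positivity)

/-- The difference of two same-shape Gamma CDFs (higher rate minus lower rate) is
strictly increasing on `[0, q̃]` and strictly decreasing on `[q̃, ∞)` where
`q̃ = a·ln(r2/r1)/(r2 − r1)`; in particular it attains its maximum over `[0, ∞)`
exactly at `q̃`. -/
theorem gammaCDFReal_difference_unimodal
    (a r1 r2 : ℝ) (ha : 0 < a) (hr1 : 0 < r1) (h12 : r1 < r2) :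
    StrictMonoOn (fun q : ℝ => gammaCDFReal a r2 q - gammaCDFReal a r1 q)
      (Set.Icc 0 (a * Real.log (r2 / r1) / (r2 - r1))) ∧
    StrictAntiOn (fun q : ℝ => gammaCDFReal a r2 q - gammaCDFReal a r1 q)
      (Set.Ici (a * Real.log (r2 / r1) / (r2 - r1))) ∧
    ∀ q : ℝ, 0 ≤ q → q ≠ a * Real.log (r2 / r1) / (r2 - r1) →
      gammaCDFReal a r2 q - gammaCDFReal a r1 q
        < gammaCDFReal a r2 (a * Real.log (r2 / r1) / (r2 - r1))
          - gammaCDFReal a r1 (a * Real.log (r2 / r1) / (r2 - r1)) := by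
  have hr2 : 0 < r2 := hr1.trans h12
  set qt := a * Real.log (r2 / r1) / (r2 - r1) with hqt
  have hd : 0 < r2 - r1 := by linarith
  have hqtpos : 0 < qt := by
    apply div_pos _ hd
    exact mul_pos ha (Real.log_pos (by rw [lt_div_iff₀ hr1]; linarith))
  have hint : ∀ x y : ℝ, IntervalIntegrable
      (fun t => gammaPDFReal a r2 t - gammaPDFReal a r1 t) MeasureTheory.volume x y :=
    fun x y => ((integrable_gammaPDFReal' ha hr2).sub
      (integrable_gammaPDFReal' ha hr1)).intervalIntegrable
  have key : ∀ x y : ℝ,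
      (gammaCDFReal a r2 y - gammaCDFReal a r1 y) - (gammaCDFReal a r2 x - gammaCDFReal a r1 x)
        = ∫ t in x..y, (gammaPDFReal a r2 t - gammaPDFReal a r1 t) := by
    intro x y
    rw [intervalIntegral.integral_sub
      (integrable_gammaPDFReal' ha hr2).intervalIntegrable
      (integrable_gammaPDFReal' ha hr1).intervalIntegrable,
      ← gammaCDF_diff_eq ha hr2, ← gammaCDF_diff_eq ha hr1]
    ring
  have hmono : StrictMonoOn (fun q : ℝ => gammaCDFReal a r2 q - gammaCDFReal a r1 q)
      (Set.Icc 0 qt) := by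
    intro x hx y hy hxy
    have : 0 < ∫ t in x..y, (gammaPDFReal a r2 t - gammaPDFReal a r1 t) := by
      apply intervalIntegral.intervalIntegral_pos_of_pos_on (hint x y) _ hxy
      intro t ht
      have ht0 : 0 < t := lt_of_le_of_lt hx.1 ht.1
      have htq : t < qt := lt_of_lt_of_le ht.2 hy.2
      have := (gammaPDF_sign ha hr1 h12 ht0).1 htq
      linarith
    have := key x y
    simp only [sub_pos] at *
    linarith
  have hanti : StrictAntiOn (fun q : ℝ => gammaCDFReal a r2 q - gammaCDFReal a r1 q)
      (Set.Ici qt) := by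
    intro x hx y hy hxy
    have : 0 < ∫ t in x..y, (gammaPDFReal a r1 t - gammaPDFReal a r2 t) := by
      apply intervalIntegral.intervalIntegral_pos_of_pos_on _ _ hxy
      · exact ((integrable_gammaPDFReal' ha hr1).sub
          (integrable_gammaPDFReal' ha hr2)).intervalIntegrable
      · intro t ht
        have htq : qt < t := lt_of_le_of_lt hx ht.1
        have := (gammaPDF_sign ha hr1 h12 (hqtpos.trans htq)).2 htq
        linarith
    have hk := key x y
    have : (∫ t in x..y, (gammaPDFReal a r1 t - gammaPDFReal a r2 t))
        = -∫ t in x..y, (gammaPDFReal a r2 t - gammaPDFReal a r1 t) := by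
      rw [← intervalIntegral.integral_neg]
      congr 1; ext t; ring
    simp only at *
    linarith
  refine ⟨hmono, hanti, fun q hq hne => ?_⟩
  rcases lt_or_gt_of_ne hne with h | h
  · exact hmono ⟨hq, h.le⟩ ⟨hqtpos.le, le_refl qt⟩ h
  · exact hanti (le_refl qt) h.le h
end

section
/- Let k > 0 and 0 < r_poor < r_rich, set F_poor = gammaCDFReal k r_poor and F_rich = gammaCDFReal k r_rich, let n_a^poor, n_a^rich, n_a'^poor, n_a'^rich > 0 be applicant counts and g > 0, and let 0 < η < 1. Suppose q_o ≥ 0 satisfies the default equation (n_a^poor + n_a'^poor)·F_poor(q_o) + (n_a^rich + n_a'^rich)·F_rich(q_o) = g, and q_† ≥ 0 satisfies the plus-factor equation n_a^poor·F_poor(q_†/η) + n_a^rich·F_rich(q_†/η) + n_a'^poor·F_poor(q_†) + n_a'^rich·F_rich(q_†) = g. Then q_† < q_o < q_†/η: under holistic review with plus factors, the common raw threshold becomes strictly more competitive than the default for non-URM applicants, while the effective original-scale threshold for URM applicants becomes strictly less competitive than the default. -/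
open ProbabilityTheory MeasureTheory Set
open scoped ENNReal NNReal

lemma gammaCDFReal_eq_lintegral {a r : ℝ} (ha : 0 < a) (hr : 0 < r) (x : ℝ) :
    gammaCDFReal a r x = ENNReal.toReal (∫⁻ x in Iic x, gammaPDF a r x) :=
  cdf_gammaMeasure_eq_lintegral ha hr x

lemma gammaCDFReal_nonpos {a r : ℝ} (ha : 0 < a) (hr : 0 < r) {x : ℝ} (hx : x ≤ 0) :
    gammaCDFReal a r x = 0 := by
  rw [gammaCDFReal_eq_lintegral ha hr]
  have h1 : ∫⁻ t in Iic x, gammaPDF a r t = ∫⁻ t in Iio x, gammaPDF a r t :=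
    (setLIntegral_congr (Iio_ae_eq_Iic (μ := volume) (a := x))).symm
  rw [h1, lintegral_gammaPDF_of_nonpos hx, ENNReal.toReal_zero]

lemma gammaCDFReal_strict {a r : ℝ} (ha : 0 < a) (hr : 0 < r) {x y : ℝ}
    (hx : 0 ≤ x) (hxy : x < y) : gammaCDFReal a r x < gammaCDFReal a r y := by
  rw [gammaCDFReal_eq_lintegral ha hr, gammaCDFReal_eq_lintegral ha hr]
  have hmeas : Measurable (gammaPDF a r) :=
    (measurable_gammaPDFReal a r).ennreal_ofReal
  have hle : ∀ z : ℝ, ∫⁻ t in Iic z, gammaPDF a r t ≤ 1 := fun z ↦ by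
    rw [← lintegral_gammaPDF_eq_one ha hr]
    exact setLIntegral_le_lintegral _ _
  have hsplit : ∫⁻ t in Iic y, gammaPDF a r t
      = (∫⁻ t in Iic x, gammaPDF a r t) + ∫⁻ t in Ioc x y, gammaPDF a r t := by
    rw [← lintegral_union measurableSet_Ioc (Iic_disjoint_Ioc le_rfl),
      Iic_union_Ioc_eq_Iic hxy.le]
  have hpos : 0 < ∫⁻ t in Ioc x y, gammaPDF a r t := by
    refine lt_of_lt_of_le ?_ (lintegral_mono_set Ioo_subset_Ioc_self)
    rw [lintegral_pos_iff_support hmeas]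
    have hsub : Ioo x y ⊆ Function.support (gammaPDF a r) := by
      intro t ht
      have htpos : 0 < t := lt_of_le_of_lt hx ht.1
      simp only [Function.mem_support, gammaPDF_of_nonneg htpos.le, ne_eq,
        ENNReal.ofReal_eq_zero, not_le]
      have := gammaPDFReal_pos ha hr htpos
      rw [gammaPDFReal, if_pos htpos.le] at this
      exact this
    calc (0 : ℝ≥0∞) < volume (Ioo x y) := by
          rw [Real.volume_Ioo]; exact ENNReal.ofReal_pos.mpr (by linarith)
      _ = (volume.restrict (Ioo x y)) (Function.support (gammaPDF a r)) := by
          rw [Measure.restrict_apply₀' measurableSet_Ioo.nullMeasurableSet,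
            Set.inter_eq_right.mpr hsub]
  have hfinx : ∫⁻ t in Iic x, gammaPDF a r t ≠ ⊤ := (lt_of_le_of_lt (hle x) (by simp)).ne
  have hfiny : ∫⁻ t in Iic y, gammaPDF a r t ≠ ⊤ := (lt_of_le_of_lt (hle y) (by simp)).ne
  refine (ENNReal.toReal_lt_toReal hfinx hfiny).mpr ?_
  rw [hsplit]
  exact ENNReal.lt_add_right hfinx hpos.ne'

/-- Under holistic review with plus factor `η < 1` and a fixed total number of spots,
the raw threshold is strictly more competitive than the default while the effective
original-scale threshold for URM applicants is strictly less competitive: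
`q_† < q_o < q_† / η`. -/
theorem plus_factor_threshold_sandwich
    (k r_poor r_rich : ℝ) (hk : 0 < k) (hrp : 0 < r_poor) (hlt : r_poor < r_rich)
    (napoor narich nbpoor nbrich g : ℝ)
    (hnapoor : 0 < napoor) (hnarich : 0 < narich)
    (hnbpoor : 0 < nbpoor) (hnbrich : 0 < nbrich) (hg : 0 < g)
    (η : ℝ) (hη0 : 0 < η) (hη1 : η < 1)
    (qo : ℝ) (hqo : 0 ≤ qo)
    (hdefault : (napoor + nbpoor) * gammaCDFReal k r_poor qo
      + (narich + nbrich) * gammaCDFReal k r_rich qo = g)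
    (qd : ℝ) (hqd : 0 ≤ qd)
    (hplus : napoor * gammaCDFReal k r_poor (qd / η)
      + narich * gammaCDFReal k r_rich (qd / η)
      + nbpoor * gammaCDFReal k r_poor qd
      + nbrich * gammaCDFReal k r_rich qd = g) :
    qd < qo ∧ qo < qd / η := by
  have hrr : 0 < r_rich := hrp.trans hlt
  -- positivity of thresholds
  have hqd0 : 0 < qd := by
    rcases hqd.lt_or_eq with h | h
    · exact h
    · exfalso
      rw [← h, zero_div, gammaCDFReal_nonpos hk hrp le_rfl,
        gammaCDFReal_nonpos hk hrr le_rfl] at hplus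
      simp at hplus; linarith
  have hqo0 : 0 < qo := by
    rcases hqo.lt_or_eq with h | h
    · exact h
    · exfalso
      rw [← h, gammaCDFReal_nonpos hk hrp le_rfl,
        gammaCDFReal_nonpos hk hrr le_rfl] at hdefault
      simp at hdefault; linarith
  have hqdlt : qd < qd / η := by
    rw [lt_div_iff₀ hη0]; nlinarith
  have hmonoP := (gammaCDFReal k r_poor).mono
  have hmonoR := (gammaCDFReal k r_rich).mono
  constructor
  · by_contra h
    push_neg at h  -- qo ≤ qd
    have h1 : gammaCDFReal k r_poor qo < gammaCDFReal k r_poor (qd / η) :=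
      gammaCDFReal_strict hk hrp hqo (lt_of_le_of_lt h hqdlt)
    have h2 : gammaCDFReal k r_rich qo < gammaCDFReal k r_rich (qd / η) :=
      gammaCDFReal_strict hk hrr hqo (lt_of_le_of_lt h hqdlt)
    have h3 : gammaCDFReal k r_poor qo ≤ gammaCDFReal k r_poor qd := hmonoP h
    have h4 : gammaCDFReal k r_rich qo ≤ gammaCDFReal k r_rich qd := hmonoR h
    nlinarith [mul_lt_mul_of_pos_left h1 hnapoor, mul_lt_mul_of_pos_left h2 hnarich,
      mul_le_mul_of_nonneg_left h3 hnbpoor.le, mul_le_mul_of_nonneg_left h4 hnbrich.le]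
  · by_contra h
    push_neg at h  -- qd / η ≤ qo
    have h1 : gammaCDFReal k r_poor qd < gammaCDFReal k r_poor qo :=
      gammaCDFReal_strict hk hrp hqd (lt_of_lt_of_le hqdlt h)
    have h2 : gammaCDFReal k r_rich qd < gammaCDFReal k r_rich qo :=
      gammaCDFReal_strict hk hrr hqd (lt_of_lt_of_le hqdlt h)
    have h3 : gammaCDFReal k r_poor (qd / η) ≤ gammaCDFReal k r_poor qo := hmonoP h
    have h4 : gammaCDFReal k r_rich (qd / η) ≤ gammaCDFReal k r_rich qo := hmonoR h
    nlinarith [mul_lt_mul_of_pos_left h1 hnbpoor, mul_lt_mul_of_pos_left h2 hnbrich,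
      mul_le_mul_of_nonneg_left h3 hnapoor.le, mul_le_mul_of_nonneg_left h4 hnarich.le]
end
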